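/- arXiv:1609.07199 — 2 statements merged into one kernel-verified Lean document; each statement's English description precedes it below -/
import Mathlib

section
/- Let θ be a CPWL function with (z̄,v̄) ∈ gph ∂θ and fix a representation of v̄ with index sets J₁, J₂. Then there exists a neighborhood O of (z̄,v̄) in ℝ^m × ℝ^m such that for every pair (z,v) ∈ O with v ∈ ∂θ(z) one has the inclusions J₁ ⊆ K(z) and J₂ ⊆ I(z). -/
open Filter Topology Set RealInnerProductSpace

noncomputable section

abbrev Ev (k : ℕ) := EuclideanSpace ℝ (Fin k)

/-- The Bouligand–Severi tangent cone to a set `s` at `x`. -/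
def tcone {E : Type*} [NormedAddCommGroup E] [NormedSpace ℝ E] (s : Set E) (x : E) : Set E :=
  {w | ∃ (z : ℕ → E) (c : ℕ → ℝ), (∀ k, z k ∈ s) ∧ (∀ k, 0 ≤ c k) ∧
      Tendsto z atTop (𝓝 x) ∧ Tendsto (fun k => c k • (z k - x)) atTop (𝓝 w)}

/-- The data of a convex piecewise linear (CPWL) extended-real-valued function on `ℝ^m`:
`θ(z) = max_i (⟨a i, z⟩ - al i)` on the polyhedron `dom θ = {z | ⟨d i, z⟩ ≤ be i ∀ i}`,
and `θ(z) = +∞` outside of it. -/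
structure CPWL (m : ℕ) where
  l : ℕ
  p : ℕ
  hl : 0 < l
  a : Fin l → Ev m
  al : Fin l → ℝ
  d : Fin p → Ev m
  be : Fin p → ℝ
  dom_nonempty : ∃ z : Ev m, ∀ i, ⟪d i, z⟫ ≤ be i

namespace CPWL

variable {m : ℕ} (θ : CPWL m)

/-- The (polyhedral) domain of the CPWL function. -/
def dom : Set (Ev m) := {z | ∀ i, ⟪θ.d i, z⟫ ≤ θ.be i}

/-- The real value `max_i (⟨a i, z⟩ - al i)` of the CPWL function (meaningful on its domain). -/
def val (z : Ev m) : ℝ := ⨆ i : Fin θ.l, (⟪θ.a i, z⟫ - θ.al i)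

/-- The CPWL function as an extended-real-valued function. -/
def eval (z : Ev m) : EReal :=
  @ite _ (z ∈ θ.dom) (Classical.propDecidable _) ((θ.val z : ℝ) : EReal) ⊤

/-- The subdifferential (of convex analysis) of the CPWL function. -/
def subdiff (z : Ev m) : Set (Ev m) :=
  {v | z ∈ θ.dom ∧ ∀ z' ∈ θ.dom, ⟪v, z' - z⟫ ≤ θ.val z' - θ.val z}

/-- Active indices `K(z)` of the max-representation. -/
def Kact (z : Ev m) : Set (Fin θ.l) := {i | θ.val z = ⟪θ.a i, z⟫ - θ.al i}

/-- Active indices `I(z)` of the domain constraints. -/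
def Iact (z : Ev m) : Set (Fin θ.p) := {i | ⟪θ.d i, z⟫ = θ.be i}

/-- The critical cone `𝒦(z̄,v̄) = {w ∈ T(z̄; dom θ) : ⟨v̄,w⟩ = θ′(z̄;w)}`. -/
def crit (zb vb : Ev m) : Set (Ev m) :=
  {w | w ∈ tcone θ.dom zb ∧
    Tendsto (fun t : ℝ => (θ.val (zb + t • w) - θ.val zb) / t) (𝓝[>] (0 : ℝ))
      (𝓝 ⟪vb, w⟫)}

/-- The graph of the subdifferential mapping. -/
def gph : Set (Ev m × Ev m) := {zv | zv.2 ∈ θ.subdiff zv.1}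

/-- The graphical derivative `(D∂θ)(z̄,v̄)(u)`. -/
def Dsub (zb vb u : Ev m) : Set (Ev m) := {w | (u, w) ∈ tcone θ.gph (zb, vb)}

/-- The regular coderivative `(D̂*∂θ)(z̄,v̄)(u)`. -/
def Dhat (zb vb u : Ev m) : Set (Ev m) :=
  {w | ∀ h ∈ tcone θ.gph (zb, vb), ⟪w, h.1⟫ - ⟪u, h.2⟫ ≤ 0}

end CPWL

section VarSys

variable {n m : ℕ}

/-- The adjoint `∇Φ(x)*` of the Jacobian of `Φ` at `x`. -/
def adjD (Φ : Ev n → Ev m) (x : Ev n) : Ev m →L[ℝ] Ev n :=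
  ContinuousLinearMap.adjoint (fderiv ℝ Φ x)

/-- `Ψ(x,v) = f(x) + ∇Φ(x)* v`. -/
def Psi (f : Ev n → Ev n) (Φ : Ev n → Ev m) (x : Ev n) (v : Ev m) : Ev n :=
  f x + adjD Φ x v

/-- The partial Jacobian `∇ₓΨ(x̄,v̄)`. -/
def gradxPsi (f : Ev n → Ev n) (Φ : Ev n → Ev m) (xb : Ev n) (vb : Ev m) :
    Ev n →L[ℝ] Ev n :=
  fderiv ℝ (fun x => Psi f Φ x vb) xb

/-- The Lagrange multiplier set `Λ(x̄)` of the variational system. -/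
def Lam (f : Ev n → Ev n) (Φ : Ev n → Ev m) (θ : CPWL m) (xb : Ev n) : Set (Ev m) :=
  {v | Psi f Φ xb v = 0 ∧ v ∈ θ.subdiff (Φ xb)}

/-- `v̄` is a critical multiplier for the variational system. -/
def IsCritical (f : Ev n → Ev n) (Φ : Ev n → Ev m) (θ : CPWL m) (xb : Ev n) (vb : Ev m) :
    Prop :=
  ∃ ξ : Ev n, ξ ≠ 0 ∧ ∃ w ∈ θ.Dsub (Φ xb) vb (fderiv ℝ Φ xb ξ),
    gradxPsi f Φ xb vb ξ + adjD Φ xb w = 0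

/-- The solution map of the canonically perturbed variational system. -/
def Smap (f : Ev n → Ev n) (Φ : Ev n → Ev m) (θ : CPWL m) (p₁ : Ev n) (p₂ : Ev m) :
    Set (Ev n × Ev m) :=
  {xv | Psi f Φ xv.1 xv.2 = p₁ ∧ xv.2 ∈ θ.subdiff (Φ xv.1 + p₂)}

end VarSys

section General

variable {n m : ℕ}

/-- The subdifferential of a general extended-real-valued function. -/
def subdiffE (θ : Ev m → EReal) (z : Ev m) : Set (Ev m) :=
  {v | ∀ z', ((⟪v, z' - z⟫ : ℝ) : EReal) ≤ θ z' - θ z}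

/-- The graph of the subdifferential of a general extended-real-valued function. -/
def gphE (θ : Ev m → EReal) : Set (Ev m × Ev m) := {zv | zv.2 ∈ subdiffE θ zv.1}

/-- The graphical derivative of the subdifferential, general case. -/
def DsubE (θ : Ev m → EReal) (zb vb u : Ev m) : Set (Ev m) :=
  {w | (u, w) ∈ tcone (gphE θ) (zb, vb)}

/-- The Lagrange multiplier set, general case. -/
def LamE (f : Ev n → Ev n) (Φ : Ev n → Ev m) (θ : Ev m → EReal) (xb : Ev n) :
    Set (Ev m) :=
  {v | Psi f Φ xb v = 0 ∧ v ∈ subdiffE θ (Φ xb)}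

/-- The solution map of the canonically perturbed variational system, general case. -/
def SmapE (f : Ev n → Ev n) (Φ : Ev n → Ev m) (θ : Ev m → EReal) (p₁ : Ev n)
    (p₂ : Ev m) : Set (Ev n × Ev m) :=
  {xv | Psi f Φ xv.1 xv.2 = p₁ ∧ xv.2 ∈ subdiffE θ (Φ xv.1 + p₂)}

end General

section Composite

variable {n m : ℕ}

/-- The gradient `∇ₓL(·,v)` of the Lagrangian `L(x,v) = φ₀(x) + ⟨Φ(x),v⟩`. -/
def gradL (φ₀ : Ev n → ℝ) (Φ : Ev n → Ev m) (v : Ev m) (x : Ev n) : Ev n :=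
  gradient (fun y => φ₀ y + ⟪Φ y, v⟫) x

/-- The Hessian `∇²ₓₓL(x̄,v)` as a linear operator. -/
def HessOp (φ₀ : Ev n → ℝ) (Φ : Ev n → Ev m) (v : Ev m) (xb : Ev n) : Ev n →L[ℝ] Ev n :=
  fderiv ℝ (gradL φ₀ Φ v) xb

/-- The Lagrange multiplier set `Λ_com(x̄)` of the composite optimization problem. -/
def LamCom (φ₀ : Ev n → ℝ) (Φ : Ev n → Ev m) (θ : CPWL m) (xb : Ev n) : Set (Ev m) :=
  {v | gradient φ₀ xb + adjD Φ xb v = 0 ∧ v ∈ θ.subdiff (Φ xb)}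

/-- Criticality of a multiplier in the composite optimization setting. -/
def IsCriticalCom (φ₀ : Ev n → ℝ) (Φ : Ev n → Ev m) (θ : CPWL m) (xb : Ev n) (v : Ev m) :
    Prop :=
  ∃ ξ : Ev n, ξ ≠ 0 ∧ ∃ w ∈ θ.Dsub (Φ xb) v (fderiv ℝ Φ xb ξ),
    HessOp φ₀ Φ v xb ξ + adjD Φ xb w = 0

/-- The solution map of the canonically perturbed KKT system of composite optimization. -/
def SKKT (φ₀ : Ev n → ℝ) (Φ : Ev n → Ev m) (θ : CPWL m) (p₁ : Ev n) (p₂ : Ev m) :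
    Set (Ev n × Ev m) :=
  {xv | gradient φ₀ xv.1 + adjD Φ xv.1 xv.2 = p₁ ∧ xv.2 ∈ θ.subdiff (Φ xv.1 + p₂)}

/-- `x̄` is a local minimizer of `φ₀ + θ∘Φ`. -/
def LocalMin (φ₀ : Ev n → ℝ) (Φ : Ev n → Ev m) (θ : CPWL m) (xb : Ev n) : Prop :=
  ∃ U ∈ 𝓝 xb, ∀ x ∈ U,
    ((φ₀ xb : ℝ) : EReal) + θ.eval (Φ xb) ≤ ((φ₀ x : ℝ) : EReal) + θ.eval (Φ x)

end Composite

section Calmness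

variable {n m : ℕ}

/-- Isolated calmness of a solution map at `((0,0), q0)`. -/
def IsolCalm (S : Ev n × Ev m → Set (Ev n × Ev m)) (q0 : Ev n × Ev m) : Prop :=
  ∃ c : ℝ, 0 ≤ c ∧ ∃ U ∈ 𝓝 (0 : Ev n × Ev m), ∃ V ∈ 𝓝 q0,
    ∀ p ∈ U, ∀ q ∈ S p ∩ V, ‖q - q0‖ ≤ c * (‖p.1‖ + ‖p.2‖)

/-- Robust isolated calmness of a solution map at `((0,0), q0)`. -/
def RobustIsolCalm (S : Ev n × Ev m → Set (Ev n × Ev m)) (q0 : Ev n × Ev m) : Prop :=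
  ∃ c : ℝ, 0 ≤ c ∧ ∃ U ∈ 𝓝 (0 : Ev n × Ev m), ∃ V ∈ 𝓝 q0,
    (∀ p ∈ U, ∀ q ∈ S p ∩ V, ‖q - q0‖ ≤ c * (‖p.1‖ + ‖p.2‖)) ∧
    (∀ p ∈ U, (S p ∩ V).Nonempty)

/-- The Lipschitz-like (Aubin) property of a solution map around `((0,0), q0)`. -/
def LipschitzLike (S : Ev n × Ev m → Set (Ev n × Ev m)) (q0 : Ev n × Ev m) : Prop :=
  ∃ c : ℝ, 0 ≤ c ∧ ∃ U ∈ 𝓝 (0 : Ev n × Ev m), ∃ V ∈ 𝓝 q0,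
    ∀ p ∈ U, ∀ p' ∈ U, ∀ q ∈ S p ∩ V, ∃ q' ∈ S p', ‖q - q'‖ ≤ c * ‖p - p'‖

end Calmness

section Stmt0Aux

variable {m : ℕ}

private lemma fin_ne (θ : CPWL m) : Nonempty (Fin θ.l) := ⟨⟨0, θ.hl⟩⟩

lemma CPWL.le_val (θ : CPWL m) (z : Ev m) (i : Fin θ.l) :
    ⟪θ.a i, z⟫ - θ.al i ≤ θ.val z := by
  rw [CPWL.val]
  exact le_ciSup (f := fun i => ⟪θ.a i, z⟫ - θ.al i) (Finite.bddAbove_range _) i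

lemma CPWL.val_le (θ : CPWL m) {z : Ev m} {c : ℝ} (h : ∀ i, ⟪θ.a i, z⟫ - θ.al i ≤ c) :
    θ.val z ≤ c := by
  have := fin_ne θ
  rw [CPWL.val]
  exact ciSup_le h

lemma CPWL.val_eq_sup' (θ : CPWL m) (z : Ev m) :
    θ.val z = Finset.univ.sup' (have := fin_ne θ; Finset.univ_nonempty)
      (fun i => ⟪θ.a i, z⟫ - θ.al i) := by
  have := fin_ne θ
  rw [CPWL.val]
  exact (Finset.sup'_univ_eq_ciSup _).symm

lemma CPWL.exists_val_eq (θ : CPWL m) (z : Ev m) :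
    ∃ i, θ.val z = ⟪θ.a i, z⟫ - θ.al i := by
  have := fin_ne θ
  obtain ⟨i, -, hi⟩ := Finset.exists_mem_eq_sup' (Finset.univ_nonempty (α := Fin θ.l))
    (fun i : Fin θ.l => ⟪θ.a i, z⟫ - θ.al i)
  exact ⟨i, by rw [θ.val_eq_sup' z, hi]⟩

lemma CPWL.continuous_val (θ : CPWL m) : Continuous θ.val := by
  have := fin_ne θ
  have h : θ.val = fun z => Finset.univ.sup' Finset.univ_nonempty
      (fun i => ⟪θ.a i, z⟫ - θ.al i) := funext θ.val_eq_sup'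
  rw [h]
  exact Continuous.finset_sup'_apply Finset.univ_nonempty
    (fun i _ => (continuous_const.inner continuous_id).sub continuous_const)

lemma CPWL.isClosed_dom (θ : CPWL m) : IsClosed θ.dom := by
  have h : θ.dom = ⋂ i, {z : Ev m | ⟪θ.d i, z⟫ ≤ θ.be i} := by
    ext z; simp [CPWL.dom]
  rw [h]
  exact isClosed_iInter fun i =>
    isClosed_le (continuous_const.inner continuous_id) continuous_const

lemma CPWL.isClosed_subdiff (θ : CPWL m) (z : Ev m) : IsClosed (θ.subdiff z) := by
  by_cases hz : z ∈ θ.dom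
  · have h : θ.subdiff z = ⋂ z' ∈ θ.dom, {v : Ev m | ⟪v, z' - z⟫ ≤ θ.val z' - θ.val z} := by
      ext v
      simp only [CPWL.subdiff, Set.mem_setOf_eq, Set.mem_iInter, hz, true_and]
    rw [h]
    exact isClosed_biInter fun z' _ =>
      isClosed_le (continuous_id.inner continuous_const) continuous_const
  · have h : θ.subdiff z = ∅ := by ext v; simp [CPWL.subdiff, hz]
    rw [h]; exact isClosed_empty

/-- The candidate subgradient set built from index sets `K', I'`. -/
def Cset (θ : CPWL m) (K' : Finset (Fin θ.l)) (I' : Finset (Fin θ.p)) : Set (Ev m) :=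
  {v | ∃ lam : Fin θ.l → ℝ, ∃ mu : Fin θ.p → ℝ,
    (∀ i, 0 ≤ lam i) ∧ (∀ i, lam i ≠ 0 → i ∈ K') ∧ (∑ i, lam i = 1) ∧
    (∀ j, 0 ≤ mu j) ∧ (∀ j, mu j ≠ 0 → j ∈ I') ∧
    v = (∑ i, lam i • θ.a i) + ∑ j, mu j • θ.d j}

lemma convex_Cset (θ : CPWL m) (K' : Finset (Fin θ.l)) (I' : Finset (Fin θ.p)) :
    Convex ℝ (Cset θ K' I') := by
  rintro v₁ ⟨l₁, m₁, h₁0, h₁K, h₁s, h₁m0, h₁I, rfl⟩ v₂ ⟨l₂, m₂, h₂0, h₂K, h₂s, h₂m0, h₂I, rfl⟩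
    s t hs ht hst
  refine ⟨fun i => s * l₁ i + t * l₂ i, fun j => s * m₁ j + t * m₂ j, ?_, ?_, ?_, ?_, ?_, ?_⟩
  · intro i; exact add_nonneg (mul_nonneg hs (h₁0 i)) (mul_nonneg ht (h₂0 i))
  · intro i hi
    by_cases h1 : l₁ i ≠ 0
    · exact h₁K i h1
    by_cases h2 : l₂ i ≠ 0
    · exact h₂K i h2
    push_neg at h1 h2
    exact absurd (show s * l₁ i + t * l₂ i = 0 by rw [h1, h2]; ring) hi
  · simp only [Finset.sum_add_distrib, ← Finset.mul_sum, h₁s, h₂s, mul_one]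
    exact hst
  · intro j; exact add_nonneg (mul_nonneg hs (h₁m0 j)) (mul_nonneg ht (h₂m0 j))
  · intro j hj
    by_cases h1 : m₁ j ≠ 0
    · exact h₁I j h1
    by_cases h2 : m₂ j ≠ 0
    · exact h₂I j h2
    push_neg at h1 h2
    exact absurd (show s * m₁ j + t * m₂ j = 0 by rw [h1, h2]; ring) hj
  · simp only [smul_add, Finset.smul_sum, add_smul, mul_smul, Finset.sum_add_distrib]
    abel

lemma Cset_subset_subdiff (θ : CPWL m) {K' : Finset (Fin θ.l)} {I' : Finset (Fin θ.p)}
    {z : Ev m} (hz : z ∈ θ.dom)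
    (hK : ∀ i ∈ K', i ∈ θ.Kact z) (hI : ∀ j ∈ I', j ∈ θ.Iact z) :
    Cset θ K' I' ⊆ θ.subdiff z := by
  rintro v ⟨lam, mu, hl0, hlK, hls, hm0, hmI, rfl⟩
  refine ⟨hz, fun z' hz' => ?_⟩
  rw [inner_add_left, sum_inner, sum_inner]
  simp only [real_inner_smul_left]
  have hA : ∑ i, lam i * ⟪θ.a i, z' - z⟫ ≤ θ.val z' - θ.val z := by
    have h1 : ∑ i, lam i * ⟪θ.a i, z' - z⟫ ≤ ∑ i, lam i * (θ.val z' - θ.val z) := by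
      refine Finset.sum_le_sum fun i _ => ?_
      by_cases hli : lam i = 0
      · simp [hli]
      · have hiK : i ∈ θ.Kact z := hK i (hlK i hli)
        have hval : θ.val z = ⟪θ.a i, z⟫ - θ.al i := hiK
        have hle : ⟪θ.a i, z' - z⟫ ≤ θ.val z' - θ.val z := by
          rw [inner_sub_right, hval]
          have := θ.le_val z' i
          linarith
        exact mul_le_mul_of_nonneg_left hle (hl0 i)
    calc ∑ i, lam i * ⟪θ.a i, z' - z⟫ ≤ ∑ i, lam i * (θ.val z' - θ.val z) := h1
      _ = (∑ i, lam i) * (θ.val z' - θ.val z) := (Finset.sum_mul _ _ _).symm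
      _ = θ.val z' - θ.val z := by rw [hls, one_mul]
  have hD : ∑ j, mu j * ⟪θ.d j, z' - z⟫ ≤ 0 := by
    refine Finset.sum_nonpos fun j _ => ?_
    by_cases hmj : mu j = 0
    · simp [hmj]
    · have hjI : j ∈ θ.Iact z := hI j (hmI j hmj)
      have hact : ⟪θ.d j, z⟫ = θ.be j := hjI
      have hle : ⟪θ.d j, z' - z⟫ ≤ 0 := by
        rw [inner_sub_right, hact]
        have := hz' j
        linarith
      exact mul_nonpos_of_nonneg_of_nonpos (hm0 j) hle
  linarith

open Classical in
/-- The finset of active indices of the max-representation. -/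
noncomputable def Kfin (θ : CPWL m) (z : Ev m) : Finset (Fin θ.l) :=
  Finset.univ.filter (· ∈ θ.Kact z)

open Classical in
/-- The finset of active indices of the domain constraints. -/
noncomputable def Ifin (θ : CPWL m) (z : Ev m) : Finset (Fin θ.p) :=
  Finset.univ.filter (· ∈ θ.Iact z)

lemma mem_Kfin {θ : CPWL m} {z : Ev m} {i : Fin θ.l} : i ∈ Kfin θ z ↔ i ∈ θ.Kact z := by
  simp [Kfin]

lemma mem_Ifin {θ : CPWL m} {z : Ev m} {j : Fin θ.p} : j ∈ Ifin θ z ↔ j ∈ θ.Iact z := by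
  simp [Ifin]

lemma subdiff_subset_closure_Cset (θ : CPWL m) {z v : Ev m} (hv : v ∈ θ.subdiff z) :
    v ∈ closure (Cset θ (Kfin θ z) (Ifin θ z)) := by
  classical
  by_contra hcl
  obtain ⟨f, u, hfu, huv⟩ := geometric_hahn_banach_closed_point
    ((convex_Cset θ _ _).closure) isClosed_closure hcl
  obtain ⟨i₀, hi₀⟩ := θ.exists_val_eq z
  have hi₀K : i₀ ∈ Kfin θ z := mem_Kfin.2 hi₀
  -- basic elements of the Cset
  have haC : ∀ i ∈ Kfin θ z, θ.a i ∈ Cset θ (Kfin θ z) (Ifin θ z) := by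
    intro i hi
    refine ⟨fun k => if k = i then 1 else 0, 0, ?_, ?_, ?_, ?_, ?_, ?_⟩
    · intro k; dsimp only; split <;> norm_num
    · intro k hk; dsimp only at hk; rcases eq_or_ne k i with rfl | h
      · exact hi
      · simp [h] at hk
    · simp
    · intro j; exact le_refl 0
    · intro j hj; simp at hj
    · simp [ite_smul]
  have hadC : ∀ (t : ℝ), 0 ≤ t → ∀ j ∈ Ifin θ z,
      θ.a i₀ + t • θ.d j ∈ Cset θ (Kfin θ z) (Ifin θ z) := by
    intro t ht j hj
    refine ⟨fun k => if k = i₀ then 1 else 0, fun k => if k = j then t else 0, ?_, ?_, ?_, ?_, ?_, ?_⟩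
    · intro k; dsimp only; split <;> norm_num
    · intro k hk; dsimp only at hk; rcases eq_or_ne k i₀ with rfl | h
      · exact hi₀K
      · simp [h] at hk
    · simp
    · intro k; dsimp only; split
      · exact ht
      · exact le_refl 0
    · intro k hk; dsimp only at hk; rcases eq_or_ne k j with rfl | h
      · exact hj
      · simp [h] at hk
    · simp [ite_smul]
  have hfa : ∀ i ∈ Kfin θ z, f (θ.a i) < u :=
    fun i hi => hfu _ (subset_closure (haC i hi))
  have hfd : ∀ j ∈ Ifin θ z, f (θ.d j) ≤ 0 := by
    intro j hj
    by_contra hpos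
    push_neg at hpos
    set t : ℝ := (u - f (θ.a i₀)) / f (θ.d j) + 1 with htdef
    have hfa0 : f (θ.a i₀) < u := hfa i₀ hi₀K
    have ht : 0 ≤ t := by
      rw [htdef]
      have h1 : 0 ≤ (u - f (θ.a i₀)) / f (θ.d j) := div_nonneg (by linarith) hpos.le
      linarith
    have hmem := hfu _ (subset_closure (hadC t ht j hj))
    rw [map_add, map_smul] at hmem
    have : t * f (θ.d j) = (u - f (θ.a i₀)) + f (θ.d j) := by
      rw [htdef]
      field_simp
    simp only [smul_eq_mul] at hmem
    rw [this] at hmem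
    linarith
  -- translate the functional into an inner product
  set w : Ev m := (InnerProductSpace.toDual ℝ (Ev m)).symm f with hwdef
  have hw : ∀ y : Ev m, ⟪w, y⟫ = f y := fun y => InnerProductSpace.toDual_symm_apply
  -- eventually (as t → 0⁺) we can test the subgradient inequality with z + t • w
  have hIoi : ∀ᶠ t : ℝ in 𝓝[>] 0, 0 < t := self_mem_nhdsWithin
  have hinner : ∀ (y : Ev m) (t : ℝ), ⟪y, z + t • w⟫ = ⟪y, z⟫ + t * ⟪w, y⟫ := by
    intro y t
    rw [inner_add_right, real_inner_smul_right, real_inner_comm y w]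
  have hE1 : ∀ᶠ t : ℝ in 𝓝[>] 0, ∀ i, ⟪θ.a i, z + t • w⟫ - θ.al i ≤ θ.val z + t * u := by
    rw [Filter.eventually_all]
    intro i
    by_cases hiK : i ∈ Kfin θ z
    · filter_upwards [hIoi] with t ht
      rw [hinner, hw]
      have h1 : θ.val z = ⟪θ.a i, z⟫ - θ.al i := mem_Kfin.1 hiK
      have h2 : t * f (θ.a i) ≤ t * u := mul_le_mul_of_nonneg_left (le_of_lt (hfa i hiK)) ht.le
      linarith
    · have hstrict : ⟪θ.a i, z⟫ - θ.al i < θ.val z := by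
        rcases lt_or_eq_of_le (θ.le_val z i) with h | h
        · exact h
        · exact absurd (mem_Kfin.2 h.symm) hiK
      have htend1 : Filter.Tendsto (fun t : ℝ => ⟪θ.a i, z⟫ - θ.al i + t * ⟪w, θ.a i⟫)
          (𝓝[>] 0) (𝓝 (⟪θ.a i, z⟫ - θ.al i)) := by
        have : Filter.Tendsto (fun t : ℝ => ⟪θ.a i, z⟫ - θ.al i + t * ⟪w, θ.a i⟫)
            (𝓝 0) (𝓝 (⟪θ.a i, z⟫ - θ.al i + 0 * ⟪w, θ.a i⟫)) :=
          (continuous_const.add (continuous_id.mul continuous_const)).tendsto 0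
        simpa using this.mono_left nhdsWithin_le_nhds
      have htend2 : Filter.Tendsto (fun t : ℝ => θ.val z + t * u)
          (𝓝[>] 0) (𝓝 (θ.val z)) := by
        have : Filter.Tendsto (fun t : ℝ => θ.val z + t * u)
            (𝓝 0) (𝓝 (θ.val z + 0 * u)) :=
          (continuous_const.add (continuous_id.mul continuous_const)).tendsto 0
        simpa using this.mono_left nhdsWithin_le_nhds
      filter_upwards [htend1.eventually_lt htend2 hstrict] with t ht
      rw [hinner]
      linarith [ht]
  have hE2 : ∀ᶠ t : ℝ in 𝓝[>] 0, ∀ j, ⟪θ.d j, z + t • w⟫ ≤ θ.be j := by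
    rw [Filter.eventually_all]
    intro j
    by_cases hjI : j ∈ Ifin θ z
    · filter_upwards [hIoi] with t ht
      rw [hinner, hw]
      have h1 : ⟪θ.d j, z⟫ = θ.be j := mem_Ifin.1 hjI
      have h2 : t * f (θ.d j) ≤ 0 := mul_nonpos_of_nonneg_of_nonpos ht.le (hfd j hjI)
      linarith
    · have hstrict : ⟪θ.d j, z⟫ < θ.be j := by
        rcases lt_or_eq_of_le (hv.1 j) with h | h
        · exact h
        · exact absurd (mem_Ifin.2 h) hjI
      have htend1 : Filter.Tendsto (fun t : ℝ => ⟪θ.d j, z⟫ + t * ⟪w, θ.d j⟫)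
          (𝓝[>] 0) (𝓝 (⟪θ.d j, z⟫)) := by
        have : Filter.Tendsto (fun t : ℝ => ⟪θ.d j, z⟫ + t * ⟪w, θ.d j⟫)
            (𝓝 0) (𝓝 (⟪θ.d j, z⟫ + 0 * ⟪w, θ.d j⟫)) :=
          (continuous_const.add (continuous_id.mul continuous_const)).tendsto 0
        simpa using this.mono_left nhdsWithin_le_nhds
      filter_upwards [htend1.eventually_lt tendsto_const_nhds hstrict] with t ht
      rw [hinner]
      linarith [ht]
  obtain ⟨t, ht1, ht2, htpos⟩ := (hE1.and (hE2.and hIoi)).exists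
  -- test the subgradient inequality at z + t • w
  have hdom : z + t • w ∈ θ.dom := fun j => ht2 j
  have hval : θ.val (z + t • w) ≤ θ.val z + t * u := θ.val_le fun i => ht1 i
  have hsub := hv.2 (z + t • w) hdom
  rw [add_sub_cancel_left, real_inner_smul_right] at hsub
  have hvw : ⟪v, w⟫ ≤ u := by
    have h1 : t * ⟪v, w⟫ ≤ t * u := by linarith
    exact le_of_mul_le_mul_left h1 htpos
  have hfv : u < ⟪v, w⟫ := by
    rw [real_inner_comm, hw]
    exact huv
  linarith

lemma key_calc (θ : CPWL m) {zb vb : Ev m} (hzb : zb ∈ θ.dom)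
    {lam : Fin θ.l → ℝ} {mu : Fin θ.p → ℝ}
    (hlam0 : ∀ i, 0 ≤ lam i) (hlamK : ∀ i, 0 < lam i → i ∈ θ.Kact zb)
    (hlam1 : ∑ i, lam i = 1)
    (hmu0 : ∀ i, 0 ≤ mu i) (hmuI : ∀ i, 0 < mu i → i ∈ θ.Iact zb)
    (hrep : vb = (∑ i, lam i • θ.a i) + ∑ i, mu i • θ.d i)
    {z : Ev m} (hvz : vb ∈ θ.subdiff z) :
    (∀ i, 0 < lam i → i ∈ θ.Kact z) ∧ (∀ i, 0 < mu i → i ∈ θ.Iact z) := by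
  have hzdom : z ∈ θ.dom := hvz.1
  -- the subgradient inequality at z tested with zb
  have h1 : θ.val z - θ.val zb ≤ ⟪vb, z - zb⟫ := by
    have := hvz.2 zb hzb
    have heq : ⟪vb, zb - z⟫ = -⟪vb, z - zb⟫ := by
      rw [← inner_neg_right, neg_sub]
    rw [heq] at this
    linarith
  -- the exact expansion of ⟪vb, z - zb⟫ via the representation
  set E : ℝ := ∑ i, lam i * (θ.val z - (⟪θ.a i, z⟫ - θ.al i)) with hE
  set F : ℝ := ∑ j, mu j * (θ.be j - ⟪θ.d j, z⟫) with hF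
  have h2 : ⟪vb, z - zb⟫ = (θ.val z - θ.val zb) - E - F := by
    rw [hrep, inner_add_left, sum_inner, sum_inner]
    simp only [real_inner_smul_left]
    have hA : ∑ i, lam i * ⟪θ.a i, z - zb⟫
        = ∑ i, (lam i * (θ.val z - θ.val zb) - lam i * (θ.val z - (⟪θ.a i, z⟫ - θ.al i))) := by
      refine Finset.sum_congr rfl fun i _ => ?_
      rcases eq_or_lt_of_le (hlam0 i) with h | h
      · simp [← h]
      · have hK : θ.val zb = ⟪θ.a i, zb⟫ - θ.al i := hlamK i h
        rw [inner_sub_right]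
        rw [hK]
        ring
    have hB : ∑ j, mu j * ⟪θ.d j, z - zb⟫
        = ∑ j, -(mu j * (θ.be j - ⟪θ.d j, z⟫)) := by
      refine Finset.sum_congr rfl fun j _ => ?_
      rcases eq_or_lt_of_le (hmu0 j) with h | h
      · simp [← h]
      · have hI : ⟪θ.d j, zb⟫ = θ.be j := hmuI j h
        rw [inner_sub_right, hI]
        ring
    rw [hA, hB, Finset.sum_sub_distrib, ← Finset.sum_mul, hlam1, one_mul, Finset.sum_neg_distrib]
    rw [hE, hF]
    ring
  have hE0 : 0 ≤ E := Finset.sum_nonneg fun i _ =>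
    mul_nonneg (hlam0 i) (by linarith [θ.le_val z i])
  have hF0 : 0 ≤ F := Finset.sum_nonneg fun j _ =>
    mul_nonneg (hmu0 j) (by linarith [hzdom j])
  have hEF : E + F ≤ 0 := by linarith
  have hEzero : E = 0 := by linarith
  have hFzero : F = 0 := by linarith
  constructor
  · intro i hi
    have := (Finset.sum_eq_zero_iff_of_nonneg fun i (_ : i ∈ Finset.univ) =>
      mul_nonneg (hlam0 i) (by linarith [θ.le_val z i] : (0:ℝ) ≤ θ.val z - (⟪θ.a i, z⟫ - θ.al i))).1
      hEzero i (Finset.mem_univ i)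
    have hgap : θ.val z - (⟪θ.a i, z⟫ - θ.al i) = 0 := by
      rcases mul_eq_zero.1 this with h | h
      · exact absurd h (ne_of_gt hi)
      · exact h
    show θ.val z = ⟪θ.a i, z⟫ - θ.al i
    linarith
  · intro j hj
    have := (Finset.sum_eq_zero_iff_of_nonneg fun j (_ : j ∈ Finset.univ) =>
      mul_nonneg (hmu0 j) (by linarith [hzdom j] : (0:ℝ) ≤ θ.be j - ⟪θ.d j, z⟫)).1
      hFzero j (Finset.mem_univ j)
    have hgap : θ.be j - ⟪θ.d j, z⟫ = 0 := by
      rcases mul_eq_zero.1 this with h | h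
      · exact absurd h (ne_of_gt hj)
      · exact h
    show ⟪θ.d j, z⟫ = θ.be j
    linarith

end Stmt0Aux

/-- persistence of the positive-multiplier index sets `J₁ ⊆ K(z)`, `J₂ ⊆ I(z)`
for subdifferential pairs `(z,v)` near `(z̄,v̄)`. -/
theorem stmt0 {m : ℕ} (θ : CPWL m) (zb vb : Ev m) (hzv : vb ∈ θ.subdiff zb)
    (lam : Fin θ.l → ℝ) (mu : Fin θ.p → ℝ)
    (hlam0 : ∀ i, 0 ≤ lam i) (hlamK : ∀ i, 0 < lam i → i ∈ θ.Kact zb)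
    (hlam1 : ∑ i, lam i = 1)
    (hmu0 : ∀ i, 0 ≤ mu i) (hmuI : ∀ i, 0 < mu i → i ∈ θ.Iact zb)
    (hrep : vb = (∑ i, lam i • θ.a i) + ∑ i, mu i • θ.d i) :
    ∃ O ∈ 𝓝 ((zb, vb) : Ev m × Ev m), ∀ z v : Ev m, (z, v) ∈ O → v ∈ θ.subdiff z →
      (∀ i, 0 < lam i → i ∈ θ.Kact z) ∧ (∀ i, 0 < mu i → i ∈ θ.Iact z) := by
  classical
  set Fσ : Finset (Fin θ.l) × Finset (Fin θ.p) → Set (Ev m × Ev m) := fun σ =>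
    {zv | (∀ i ∈ σ.1, i ∈ θ.Kact zv.1) ∧ (∀ j ∈ σ.2, j ∈ θ.Iact zv.1) ∧ zv.1 ∈ θ.dom ∧
      zv.2 ∈ closure (Cset θ σ.1 σ.2)} with hFσdef
  have hclosed : ∀ σ, IsClosed (Fσ σ) := by
    intro σ
    have h1 : IsClosed {zv : Ev m × Ev m | ∀ i ∈ σ.1, i ∈ θ.Kact zv.1} := by
      have he : {zv : Ev m × Ev m | ∀ i ∈ σ.1, i ∈ θ.Kact zv.1} =
          ⋂ i ∈ σ.1, {zv : Ev m × Ev m | θ.val zv.1 = ⟪θ.a i, zv.1⟫ - θ.al i} := by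
        ext zv; simp [CPWL.Kact, Set.mem_iInter]
      rw [he]
      exact isClosed_biInter fun i _ => isClosed_eq (θ.continuous_val.comp continuous_fst)
        ((continuous_const.inner continuous_fst).sub continuous_const)
    have h2 : IsClosed {zv : Ev m × Ev m | ∀ j ∈ σ.2, j ∈ θ.Iact zv.1} := by
      have he : {zv : Ev m × Ev m | ∀ j ∈ σ.2, j ∈ θ.Iact zv.1} =
          ⋂ j ∈ σ.2, {zv : Ev m × Ev m | ⟪θ.d j, zv.1⟫ = θ.be j} := by
        ext zv; simp [CPWL.Iact, Set.mem_iInter]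
      rw [he]
      exact isClosed_biInter fun j _ => isClosed_eq
        (continuous_const.inner continuous_fst) continuous_const
    have h3 : IsClosed {zv : Ev m × Ev m | zv.1 ∈ θ.dom} :=
      θ.isClosed_dom.preimage continuous_fst
    have h4 : IsClosed {zv : Ev m × Ev m | zv.2 ∈ closure (Cset θ σ.1 σ.2)} :=
      isClosed_closure.preimage continuous_snd
    have he : Fσ σ = {zv : Ev m × Ev m | ∀ i ∈ σ.1, i ∈ θ.Kact zv.1} ∩
        ({zv | ∀ j ∈ σ.2, j ∈ θ.Iact zv.1} ∩
          ({zv | zv.1 ∈ θ.dom} ∩ {zv | zv.2 ∈ closure (Cset θ σ.1 σ.2)})) := by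
      ext zv
      simp only [hFσdef, Set.mem_setOf_eq, Set.mem_inter_iff]
    rw [he]
    exact h1.inter (h2.inter (h3.inter h4))
  set B : Set (Ev m × Ev m) := ⋃ σ ∈ {σ | (zb, vb) ∉ Fσ σ}, Fσ σ with hBdef
  have hBclosed : IsClosed B :=
    Set.Finite.isClosed_biUnion (Set.toFinite _) fun σ _ => hclosed σ
  refine ⟨Bᶜ, hBclosed.isOpen_compl.mem_nhds ?_, ?_⟩
  · simp only [hBdef, Set.mem_compl_iff, Set.mem_iUnion, Set.mem_setOf_eq, not_exists]
    intro σ h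
    exact h
  · intro z v hO hv
    set σ₀ : Finset (Fin θ.l) × Finset (Fin θ.p) := (Kfin θ z, Ifin θ z) with hσ₀
    have hmem : (z, v) ∈ Fσ σ₀ :=
      ⟨fun i hi => mem_Kfin.1 hi, fun j hj => mem_Ifin.1 hj, hv.1,
        subdiff_subset_closure_Cset θ hv⟩
    have hzbvb : (zb, vb) ∈ Fσ σ₀ := by
      by_contra h
      exact hO (Set.mem_biUnion h hmem)
    have hvbcl : vb ∈ closure (Cset θ (Kfin θ z) (Ifin θ z)) := hzbvb.2.2.2
    have hvbz : vb ∈ θ.subdiff z :=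
      closure_minimal
        (Cset_subset_subdiff θ hv.1 (fun i hi => mem_Kfin.1 hi) (fun j hj => mem_Ifin.1 hj))
        (θ.isClosed_subdiff z) hvbcl
    exact key_calc θ hzv.1 hlam0
      (fun i hi => hlamK i hi) hlam1 hmu0 (fun i hi => hmuI i hi) hrep hvbz
end
end

section
/- Let θ be a CPWL function with (z̄,v̄) ∈ gph ∂θ and fix a representation of v̄ with index sets J₁, J₂. Then the critical cone satisfies 𝒦(z̄,v̄) = {u ∈ ℝ^m : ⟨a_i − a_j, u⟩ = 0 for all i,j ∈ J₁; ⟨a_i − a_j, u⟩ ≤ 0 for all (i,j) ∈ (K(z̄)∖J₁) × J₁; ⟨d_i, u⟩ = 0 for all i ∈ J₂; and ⟨d_i, u⟩ ≤ 0 for all i ∈ I(z̄)∖J₂}. -/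
open Filter Topology Set RealInnerProductSpace

noncomputable section

/-!
The tangent cone of the polyhedron `dom θ` at `z̄` is cut out by the active constraints, and for
small `t > 0` only the active pieces of the max matter, so `θ(z̄ + t w) = θ(z̄) + t M` with
`M = max_{i ∈ K(z̄)} ⟨a_i, w⟩`; hence `θ′(z̄; w) = M`. For `w` in the tangent cone,
`⟨v̄, w⟩ = ∑ λ_i ⟨a_i, w⟩ + ∑ μ_i ⟨d_i, w⟩` where the first sum is at most `M` and the second at
most `0`. So `⟨v̄, w⟩ = M` exactly when every `a_i` with `λ_i > 0` attains `M` and every `d_i`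
with `μ_i > 0` is orthogonal to `w`, which is the stated system.
-/

section TangentCone

variable {E : Type*} [NormedAddCommGroup E]

lemma mem_tcone_of_eventually_mem [NormedSpace ℝ E] {s : Set E} {x w : E}
    (h : ∀ᶠ t in 𝓝[>] (0 : ℝ), x + t • w ∈ s) : w ∈ tcone s x := by
  obtain ⟨δ, hδ, hsub⟩ := mem_nhdsGT_iff_exists_Ioo_subset.1 h
  set t : ℕ → ℝ := fun k => δ / (k + 2)
  have ht : ∀ k, t k ∈ Ioo 0 δ := fun k =>
    ⟨div_pos hδ (by positivity), div_lt_self hδ (by linarith [k.cast_nonneg (α := ℝ)])⟩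
  have ht0 : Tendsto t atTop (𝓝 0) :=
    tendsto_const_nhds.div_atTop (tendsto_natCast_atTop_atTop.atTop_add tendsto_const_nhds)
  refine ⟨fun k => x + t k • w, fun k => (t k)⁻¹, fun k => hsub (ht k),
    fun k => inv_nonneg.2 (ht k).1.le, ?_, ?_⟩
  · simpa using tendsto_const_nhds.add (ht0.smul_const w)
  · refine tendsto_const_nhds.congr fun k => ?_
    rw [add_sub_cancel_left, smul_smul, inv_mul_cancel₀ (ht k).1.ne', one_smul]

variable [InnerProductSpace ℝ E] {ι : Type*} (d : ι → E) (b : ι → ℝ)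

lemma tcone_polyhedron_subset (x : E) :
    tcone {z | ∀ i, ⟪d i, z⟫ ≤ b i} x ⊆ {w | ∀ i, ⟪d i, x⟫ = b i → ⟪d i, w⟫ ≤ 0} := by
  rintro w ⟨z, c, hz, hc, -, hlim⟩ i hi
  have hinner : Tendsto (fun k => ⟪d i, c k • (z k - x)⟫) atTop (𝓝 ⟪d i, w⟫) :=
    ((continuous_const.inner continuous_id).tendsto w).comp hlim
  refine le_of_tendsto hinner (Eventually.of_forall fun k => ?_)
  rw [real_inner_smul_right, inner_sub_right, hi]
  exact mul_nonpos_of_nonneg_of_nonpos (hc k) (sub_nonpos.2 (hz k i))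

lemma tcone_polyhedron [Finite ι] {x : E} (hx : ∀ i, ⟪d i, x⟫ ≤ b i) :
    tcone {z | ∀ i, ⟪d i, z⟫ ≤ b i} x = {w | ∀ i, ⟪d i, x⟫ = b i → ⟪d i, w⟫ ≤ 0} := by
  refine (tcone_polyhedron_subset d b x).antisymm fun w hw => mem_tcone_of_eventually_mem ?_
  refine eventually_all.2 fun i => ?_
  rcases (hx i).eq_or_lt with hi | hi
  · filter_upwards [self_mem_nhdsWithin] with t (ht : 0 < t)
    rw [inner_add_right, real_inner_smul_right, hi]
    nlinarith [hw i hi]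
  · have hcont : ContinuousAt (fun t : ℝ => ⟪d i, x + t • w⟫) 0 := by fun_prop
    have := hcont.eventually_lt continuousAt_const (by simpa using hi)
    exact (this.filter_mono nhdsWithin_le_nhds).mono fun t ht => ht.le

end TangentCone

section WeightedSums

variable {ι κ : Type*}

lemma mul_le_mul_of_nonneg_of_pos_imp {c x y : ℝ} (hc : 0 ≤ c) (h : 0 < c → x ≤ y) :
    c * x ≤ c * y := by
  rcases hc.eq_or_lt with rfl | hc
  · simp
  · exact mul_le_mul_of_nonneg_left (h hc) hc.le

lemma sum_mul_eq_sum_mul_iff [Fintype ι] {c x y : ι → ℝ} (hc : ∀ i, 0 ≤ c i)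
    (hxy : ∀ i, 0 < c i → x i ≤ y i) :
    ∑ i, c i * x i = ∑ i, c i * y i ↔ ∀ i, 0 < c i → x i = y i := by
  rw [Finset.sum_eq_sum_iff_of_le fun i _ => mul_le_mul_of_nonneg_of_pos_imp (hc i) (hxy i)]
  refine ⟨fun h i hi => mul_left_cancel₀ hi.ne' (h i (Finset.mem_univ i)), fun h i _ => ?_⟩
  rcases (hc i).eq_or_lt with hi | hi
  · simp [← hi]
  · rw [h i hi]

lemma sum_mul_add_sum_mul_eq_iff [Fintype ι] [Fintype κ] {lam g : ι → ℝ} {mu h : κ → ℝ} {M : ℝ}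
    (hlam0 : ∀ i, 0 ≤ lam i) (hlam1 : ∑ i, lam i = 1) (hg : ∀ i, 0 < lam i → g i ≤ M)
    (hmu0 : ∀ i, 0 ≤ mu i) (hh : ∀ i, 0 < mu i → h i ≤ 0) :
    ∑ i, lam i * g i + ∑ i, mu i * h i = M ↔
      (∀ i, 0 < lam i → g i = M) ∧ ∀ i, 0 < mu i → h i = 0 := by
  have hM : ∑ i, lam i * M = M := by rw [← Finset.sum_mul, hlam1, one_mul]
  have hle_g : ∑ i, lam i * g i ≤ ∑ i, lam i * M :=
    Finset.sum_le_sum fun i _ => mul_le_mul_of_nonneg_of_pos_imp (hlam0 i) (hg i)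
  have hle_h : ∑ i, mu i * h i ≤ ∑ i, mu i * 0 :=
    Finset.sum_le_sum fun i _ => mul_le_mul_of_nonneg_of_pos_imp (hmu0 i) (hh i)
  rw [← sum_mul_eq_sum_mul_iff hlam0 hg, ← sum_mul_eq_sum_mul_iff (y := fun _ => 0) hmu0 hh]
  simp only [mul_zero, Finset.sum_const_zero] at hle_h ⊢
  constructor
  · intro hsum
    constructor <;> linarith
  · rintro ⟨hg_eq, hh_eq⟩
    linarith

lemma pos_weights_maximize_iff {c g : ι → ℝ} {K : Set ι} {M : ℝ}
    (hM : IsGreatest (g '' K) M) (hc : ∀ i, 0 ≤ c i) (hcK : ∀ i, 0 < c i → i ∈ K) :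
    ((∀ i j, 0 < c i → 0 < c j → g i - g j = 0) ∧
        ∀ i j, i ∈ K → c i = 0 → 0 < c j → g i - g j ≤ 0) ↔
      ∀ j, 0 < c j → g j = M := by
  constructor
  · rintro ⟨heq, hle⟩ j hj
    obtain ⟨k, hk, rfl⟩ := hM.1
    refine le_antisymm (hM.2 (mem_image_of_mem g (hcK j hj))) ?_
    rcases (hc k).eq_or_lt with hk0 | hk0
    · linarith [hle k j hk hk0.symm hj]
    · linarith [heq k j hk0 hj]
  · intro hmax
    refine ⟨fun i j hi hj => by rw [hmax i hi, hmax j hj, sub_self], fun i j hi _ hj => ?_⟩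
    rw [hmax j hj, sub_nonpos]
    exact hM.2 (mem_image_of_mem g hi)

lemma pos_multipliers_complementary_iff {c h : ι → ℝ} {I : Set ι} (hc : ∀ i, 0 ≤ c i) :
    ((∀ i, 0 < c i → h i = 0) ∧ ∀ i ∈ I, c i = 0 → h i ≤ 0) ↔
      (∀ i ∈ I, h i ≤ 0) ∧ ∀ i, 0 < c i → h i = 0 := by
  refine ⟨fun ⟨h_eq, h_le⟩ => ⟨fun i hi => ?_, h_eq⟩,
    fun ⟨h_le, h_eq⟩ => ⟨h_eq, fun i hi _ => h_le i hi⟩⟩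
  rcases (hc i).eq_or_lt with hi0 | hi0
  · exact h_le i hi hi0.symm
  · exact (h_eq i hi0).le

end WeightedSums

namespace CPWL

variable {m : ℕ} (θ : CPWL m)

lemma le_val_s1 (z : Ev m) (i : Fin θ.l) : ⟪θ.a i, z⟫ - θ.al i ≤ θ.val z :=
  le_ciSup (f := fun j => ⟪θ.a j, z⟫ - θ.al j) (Set.finite_range _).bddAbove i

lemma Kact_nonempty (z : Ev m) : (θ.Kact z).Nonempty := by
  have : Nonempty (Fin θ.l) := ⟨⟨0, θ.hl⟩⟩
  obtain ⟨i, hi⟩ := exists_eq_ciSup_of_finite (f := fun i => ⟪θ.a i, z⟫ - θ.al i)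
  exact ⟨i, hi.symm⟩

lemma exists_isGreatest_inner_Kact (z w : Ev m) :
    ∃ M, IsGreatest ((fun i => ⟪θ.a i, w⟫) '' θ.Kact z) M := by
  obtain ⟨k, hk, hmax⟩ :=
    (θ.Kact z).exists_max_image (fun i => ⟪θ.a i, w⟫) (toFinite _) (θ.Kact_nonempty z)
  exact ⟨_, mem_image_of_mem _ hk, forall_mem_image.2 hmax⟩

variable {θ}

lemma val_add_smul_eventuallyEq {z w : Ev m} {M : ℝ}
    (hM : IsGreatest ((fun i => ⟪θ.a i, w⟫) '' θ.Kact z) M) :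
    ∀ᶠ t in 𝓝[>] (0 : ℝ), θ.val (z + t • w) = θ.val z + t * M := by
  have hbound : ∀ i, ∀ᶠ t in 𝓝[>] (0 : ℝ), ⟪θ.a i, z + t • w⟫ - θ.al i ≤ θ.val z + t * M := by
    intro i
    by_cases hi : i ∈ θ.Kact z
    · filter_upwards [self_mem_nhdsWithin] with t (ht : 0 < t)
      have hiM : ⟪θ.a i, w⟫ ≤ M := hM.2 (mem_image_of_mem _ hi)
      have hiz : θ.val z = ⟪θ.a i, z⟫ - θ.al i := hi
      rw [inner_add_right, real_inner_smul_right]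
      nlinarith
    · have hlt : ⟪θ.a i, z⟫ - θ.al i < θ.val z := (θ.le_val_s1 z i).lt_of_ne (Ne.symm hi)
      have hcont : ContinuousAt (fun t : ℝ => ⟪θ.a i, z + t • w⟫ - θ.al i - t * M) 0 := by
        fun_prop
      have := hcont.eventually_lt continuousAt_const (by simpa using hlt)
      exact (this.filter_mono nhdsWithin_le_nhds).mono fun t ht => by linarith
  have : Nonempty (Fin θ.l) := ⟨⟨0, θ.hl⟩⟩
  filter_upwards [eventually_all.2 hbound] with t hle
  obtain ⟨k, hk, hkM⟩ := hM.1
  have hkz : θ.val z = ⟪θ.a k, z⟫ - θ.al k := hk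
  refine le_antisymm (ciSup_le hle) ?_
  calc θ.val z + t * M = ⟪θ.a k, z + t • w⟫ - θ.al k := by
        rw [inner_add_right, real_inner_smul_right, ← hkM, hkz]; ring
    _ ≤ θ.val (z + t • w) := θ.le_val_s1 _ k

lemma tendsto_slope_val {z w : Ev m} {M : ℝ}
    (hM : IsGreatest ((fun i => ⟪θ.a i, w⟫) '' θ.Kact z) M) :
    Tendsto (fun t : ℝ => (θ.val (z + t • w) - θ.val z) / t) (𝓝[>] 0) (𝓝 M) := by
  refine tendsto_const_nhds.congr' ?_
  filter_upwards [val_add_smul_eventuallyEq hM, self_mem_nhdsWithin] with t hv (ht : 0 < t)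
  rw [hv, add_sub_cancel_left, mul_div_cancel_left₀ _ ht.ne']

lemma mem_crit_iff {z v w : Ev m} (hz : z ∈ θ.dom) {M : ℝ}
    (hM : IsGreatest ((fun i => ⟪θ.a i, w⟫) '' θ.Kact z) M) :
    w ∈ θ.crit z v ↔ (∀ i ∈ θ.Iact z, ⟪θ.d i, w⟫ ≤ 0) ∧ ⟪v, w⟫ = M :=
  and_congr (Set.ext_iff.1 (tcone_polyhedron θ.d θ.be hz) w)
    ⟨fun h => tendsto_nhds_unique h (tendsto_slope_val hM), fun h => h ▸ tendsto_slope_val hM⟩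

end CPWL

/-- explicit calculation of the critical cone of a CPWL function. -/
theorem stmt1 {m : ℕ} (θ : CPWL m) (zb vb : Ev m) (hzv : vb ∈ θ.subdiff zb)
    (lam : Fin θ.l → ℝ) (mu : Fin θ.p → ℝ)
    (hlam0 : ∀ i, 0 ≤ lam i) (hlamK : ∀ i, 0 < lam i → i ∈ θ.Kact zb)
    (hlam1 : ∑ i, lam i = 1)
    (hmu0 : ∀ i, 0 ≤ mu i) (hmuI : ∀ i, 0 < mu i → i ∈ θ.Iact zb)
    (hrep : vb = (∑ i, lam i • θ.a i) + ∑ i, mu i • θ.d i) :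
    θ.crit zb vb =
      {u : Ev m |
        (∀ i j, 0 < lam i → 0 < lam j → ⟪θ.a i - θ.a j, u⟫ = 0) ∧
        (∀ i j, i ∈ θ.Kact zb → lam i = 0 → 0 < lam j → ⟪θ.a i - θ.a j, u⟫ ≤ 0) ∧
        (∀ i, 0 < mu i → ⟪θ.d i, u⟫ = 0) ∧
        (∀ i, i ∈ θ.Iact zb → mu i = 0 → ⟪θ.d i, u⟫ ≤ 0)} := by
  ext w
  obtain ⟨M, hM⟩ := θ.exists_isGreatest_inner_Kact zb w
  have hvw : ⟪vb, w⟫ = ∑ i, lam i * ⟪θ.a i, w⟫ + ∑ i, mu i * ⟪θ.d i, w⟫ := by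
    simp only [hrep, inner_add_left, sum_inner, real_inner_smul_left]
  have hg : ∀ i, 0 < lam i → ⟪θ.a i, w⟫ ≤ M := fun i hi => hM.2 (mem_image_of_mem _ (hlamK i hi))
  rw [CPWL.mem_crit_iff hzv.1 hM, hvw, mem_ofPred_eq, ← and_assoc]
  simp only [inner_sub_left]
  rw [pos_weights_maximize_iff hM hlam0 hlamK, pos_multipliers_complementary_iff hmu0]
  refine (and_congr_right fun hT =>
    sum_mul_add_sum_mul_eq_iff hlam0 hlam1 hg hmu0 fun i hi => hT i (hmuI i hi)).trans ?_
  exact and_left_comm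
end
end
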